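/- arXiv:1602.06287 — 4 statements merged into one kernel-verified Lean document; each statement's English description precedes it below -/
import Mathlib

section
/- For every N ≥ 0 there exists C > 0 such that for all λ > 0, all r, r' > 0 and all z, z' ∈ ℝ^{n-1}: (1 + |r−r'|/λ + |z − (r/r') z'|/λ)^{−3N} · (1 + |z'|/r')^{−N} ≤ C (1 + |r−r'|/λ + |z − z'|/λ)^{−N}. -/
theorem stmt_1 (n : ℕ) (hn : 2 ≤ n) (N : ℝ) (hN : 0 ≤ N) :
    ∃ C > 0, ∀ (lam r r' : ℝ), 0 < lam → 0 < r → 0 < r' →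
      ∀ (z z' : EuclideanSpace ℝ (Fin (n-1))),
      (1 + |r - r'| / lam + ‖z - (r / r') • z'‖ / lam) ^ (-(3 * N))
          * (1 + ‖z'‖ / r') ^ (-N)
        ≤ C * (1 + |r - r'| / lam + ‖z - z'‖ / lam) ^ (-N) := by
  refine ⟨1, one_pos, ?_⟩
  intro lam r r' hlam hr hr' z z'
  set A := 1 + |r - r'| / lam + ‖z - (r / r') • z'‖ / lam with hAdef
  set B := 1 + ‖z'‖ / r' with hBdef
  set D := 1 + |r - r'| / lam + ‖z - z'‖ / lam with hDdef
  have h1 : (0:ℝ) ≤ |r - r'| / lam := by positivity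
  have h2 : (0:ℝ) ≤ ‖z - (r / r') • z'‖ / lam := by positivity
  have h3 : (0:ℝ) ≤ ‖z'‖ / r' := by positivity
  have h4 : (0:ℝ) ≤ ‖z - z'‖ / lam := by positivity
  have hA1 : 1 ≤ A := by simp only [hAdef]; linarith
  have hB1 : 1 ≤ B := by simp only [hBdef]; linarith
  have hD1 : 1 ≤ D := by simp only [hDdef]; linarith
  have htri : ‖z - z'‖ ≤ ‖z - (r / r') • z'‖ + (|r - r'| / r') * ‖z'‖ := by
    have heq : z - z' = (z - (r / r') • z') + ((r / r') • z' - z') := by abel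
    have h2' : ‖(r / r') • z' - z'‖ = (|r - r'| / r') * ‖z'‖ := by
      have hsm : (r / r') • z' - z' = ((r - r') / r') • z' := by
        have hc : (r - r') / r' = r / r' - 1 := by field_simp
        rw [hc, sub_smul, one_smul]
      rw [hsm, norm_smul, Real.norm_eq_abs, abs_div, abs_of_pos hr']
    calc ‖z - z'‖ = ‖(z - (r / r') • z') + ((r / r') • z' - z')‖ := by rw [← heq]
      _ ≤ ‖z - (r / r') • z'‖ + ‖(r / r') • z' - z'‖ := norm_add_le _ _
      _ = _ := by rw [h2']
  have key : D ≤ A * B := by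
    have hAa : |r - r'| / lam ≤ A := by simp only [hAdef]; linarith
    have hstep : D ≤ A + (|r - r'| / lam) * (‖z'‖ / r') := by
      have : ‖z - z'‖ / lam ≤ ‖z - (r / r') • z'‖ / lam
          + (|r - r'| / lam) * (‖z'‖ / r') := by
        calc ‖z - z'‖ / lam ≤ (‖z - (r / r') • z'‖ + (|r - r'| / r') * ‖z'‖) / lam := by
              gcongr
          _ = ‖z - (r / r') • z'‖ / lam + (|r - r'| / lam) * (‖z'‖ / r') := by ring
      simp only [hDdef, hAdef]; linarith
    have hmul : (|r - r'| / lam) * (‖z'‖ / r') ≤ A * (‖z'‖ / r') :=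
      mul_le_mul_of_nonneg_right hAa h3
    calc D ≤ A + A * (‖z'‖ / r') := by linarith
      _ = A * B := by rw [hBdef]; ring
  calc A ^ (-(3 * N)) * B ^ (-N)
      ≤ A ^ (-N) * B ^ (-N) := by
        apply mul_le_mul_of_nonneg_right
        · exact Real.rpow_le_rpow_of_exponent_le hA1 (by linarith)
        · exact Real.rpow_nonneg (by linarith) _
    _ = (A * B) ^ (-N) := (Real.mul_rpow (by linarith) (by linarith)).symm
    _ ≤ D ^ (-N) := Real.rpow_le_rpow_of_nonpos (by linarith) key (by linarith)
    _ = 1 * D ^ (-N) := (one_mul _).symm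
end

section
/- (Discrete Schur estimate) Let H be a Hilbert space and (T_ℓ)_{ℓ∈ℕ} a sequence of bounded linear operators on H such that ‖T_j^* T_ℓ‖ ≤ 2^{−|j−ℓ|/2} for all j, ℓ. Then there exists a constant C (independent of the sequence) such that for every finitely supported sequence (v_ℓ) in H, ‖Σ_ℓ T_ℓ v_ℓ‖ ≤ C (Σ_ℓ ‖v_ℓ‖²)^{1/2}. -/
/-!
Expanding the square, `‖∑ T ℓ v ℓ‖² = ∑ⱼ ∑ₗ ⟪T j v j, T ℓ v ℓ⟫` and each term is at most
`‖T j† T ℓ‖ ‖v j‖ ‖v ℓ‖ ≤ r ^ |j - ℓ| ‖v j‖ ‖v ℓ‖` with `r = 2 ^ (-1/2) < 1`. Schur's test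
bounds this quadratic form by the largest row sum of the kernel `r ^ |j - ℓ|`, which is at most
twice the geometric series `∑ r ^ k = (1 - r)⁻¹`.
-/

open Finset ContinuousLinearMap

theorem Nat.cast_dist {R : Type*} [Ring R] [LinearOrder R] [IsStrictOrderedRing R] (m n : ℕ) :
    (Nat.dist m n : R) = |(m : R) - n| := by
  rcases le_total m n with h | h
  · rw [Nat.dist_eq_sub_of_le h, abs_sub_comm, abs_of_nonneg (sub_nonneg.2 (Nat.cast_le.2 h)),
      Nat.cast_sub h]
  · rw [Nat.dist_eq_sub_of_le_right h, abs_of_nonneg (sub_nonneg.2 (Nat.cast_le.2 h)),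
      Nat.cast_sub h]

theorem Nat.sum_comp_dist_le_two_mul_tsum {f : ℕ → ℝ} (hf₀ : 0 ≤ f) (hf : Summable f)
    (s : Finset ℕ) (ℓ : ℕ) : ∑ j ∈ s, f (Nat.dist j ℓ) ≤ 2 * ∑' k, f k := by
  have key : ∀ t : Finset ℕ, Set.InjOn (Nat.dist · ℓ) t →
      ∑ j ∈ t, f (Nat.dist j ℓ) ≤ ∑' k, f k := fun t ht => by
    rw [← sum_image ht]
    exact hf.sum_le_tsum _ fun k _ => hf₀ k
  -- on either side of `ℓ`, the map `j ↦ dist j ℓ` is injective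
  rw [← sum_filter_add_sum_filter_not s (· ≤ ℓ), two_mul]
  gcongr <;> apply key <;> intro a ha b hb (hab : Nat.dist a ℓ = Nat.dist b ℓ)
    <;> simp only [coe_filter, Set.mem_ofPred_eq] at ha hb <;> unfold Nat.dist at hab <;> omega

theorem sum_sum_mul_mul_le_of_sum_le {ι : Type*} (s : Finset ι) {K : ι → ι → ℝ} {B : ℝ}
    (hK : ∀ j ∈ s, ∀ ℓ ∈ s, 0 ≤ K j ℓ) (hrow : ∀ j ∈ s, ∑ ℓ ∈ s, K j ℓ ≤ B)
    (hcol : ∀ ℓ ∈ s, ∑ j ∈ s, K j ℓ ≤ B) (u : ι → ℝ) :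
    ∑ j ∈ s, ∑ ℓ ∈ s, K j ℓ * (u j * u ℓ) ≤ B * ∑ j ∈ s, u j ^ 2 := by
  calc ∑ j ∈ s, ∑ ℓ ∈ s, K j ℓ * (u j * u ℓ)
      ≤ ∑ j ∈ s, ∑ ℓ ∈ s, (u j ^ 2 * K j ℓ / 2 + u ℓ ^ 2 * K j ℓ / 2) := by
        gcongr with j hj ℓ hℓ
        nlinarith [hK j hj ℓ hℓ, mul_nonneg (hK j hj ℓ hℓ) (sq_nonneg (u j - u ℓ))]
    _ = (∑ j ∈ s, u j ^ 2 * ∑ ℓ ∈ s, K j ℓ) / 2 + (∑ ℓ ∈ s, u ℓ ^ 2 * ∑ j ∈ s, K j ℓ) / 2 := by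
        simp only [sum_add_distrib, mul_sum, sum_div]
        rw [sum_comm (f := fun j ℓ => u ℓ ^ 2 * K j ℓ / 2)]
    _ ≤ (∑ j ∈ s, u j ^ 2 * B) / 2 + (∑ ℓ ∈ s, u ℓ ^ 2 * B) / 2 := by
        gcongr with j hj ℓ hℓ
        exacts [hrow j hj, hcol ℓ hℓ]
    _ = B * ∑ j ∈ s, u j ^ 2 := by rw [← sum_mul]; ring

section InnerProductSpace

variable {𝕜 E F : Type*} [RCLike 𝕜] [NormedAddCommGroup E] [InnerProductSpace 𝕜 E]

theorem norm_sum_sq_le_sum_sum_norm_inner {ι : Type*} (s : Finset ι) (x : ι → E) :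
    ‖∑ j ∈ s, x j‖ ^ 2 ≤ ∑ j ∈ s, ∑ ℓ ∈ s, ‖(inner 𝕜 (x j) (x ℓ) : 𝕜)‖ := by
  rw [@norm_sq_eq_re_inner 𝕜, sum_inner]
  simp only [inner_sum, map_sum]
  gcongr
  exact RCLike.re_le_norm _

variable [CompleteSpace E] [NormedAddCommGroup F] [InnerProductSpace 𝕜 F] [CompleteSpace F]

theorem norm_inner_apply_apply_le (S T : E →L[𝕜] F) (v w : E) :
    ‖(inner 𝕜 (S v) (T w) : 𝕜)‖ ≤ ‖adjoint S ∘L T‖ * (‖v‖ * ‖w‖) := by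
  rw [← adjoint_inner_right, ← comp_apply, mul_left_comm]
  exact (norm_inner_le_norm _ _).trans (by gcongr; exact le_opNorm _ _)

theorem norm_sum_apply_sq_le_of_sum_le {ι : Type*} (s : Finset ι) (T : ι → E →L[𝕜] F)
    {K : ι → ι → ℝ} {B : ℝ} (hT : ∀ j ∈ s, ∀ ℓ ∈ s, ‖adjoint (T j) ∘L T ℓ‖ ≤ K j ℓ)
    (hrow : ∀ j ∈ s, ∑ ℓ ∈ s, K j ℓ ≤ B) (hcol : ∀ ℓ ∈ s, ∑ j ∈ s, K j ℓ ≤ B) (v : ι → E) :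
    ‖∑ ℓ ∈ s, T ℓ (v ℓ)‖ ^ 2 ≤ B * ∑ ℓ ∈ s, ‖v ℓ‖ ^ 2 := by
  have hK : ∀ j ∈ s, ∀ ℓ ∈ s, 0 ≤ K j ℓ := fun j hj ℓ hℓ => (norm_nonneg _).trans (hT j hj ℓ hℓ)
  calc ‖∑ ℓ ∈ s, T ℓ (v ℓ)‖ ^ 2
      ≤ ∑ j ∈ s, ∑ ℓ ∈ s, ‖(inner 𝕜 (T j (v j)) (T ℓ (v ℓ)) : 𝕜)‖ :=
        norm_sum_sq_le_sum_sum_norm_inner s _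
    _ ≤ ∑ j ∈ s, ∑ ℓ ∈ s, K j ℓ * (‖v j‖ * ‖v ℓ‖) := by
        gcongr with j hj ℓ hℓ
        exact (norm_inner_apply_apply_le _ _ _ _).trans (by gcongr; exact hT j hj ℓ hℓ)
    _ ≤ B * ∑ ℓ ∈ s, ‖v ℓ‖ ^ 2 := sum_sum_mul_mul_le_of_sum_le s hK hrow hcol _

end InnerProductSpace

theorem two_rpow_neg_abs_sub_div_two (j ℓ : ℕ) :
    (2 : ℝ) ^ (-|(j : ℝ) - ℓ| / 2) = ((2 : ℝ) ^ (-(1 : ℝ) / 2)) ^ Nat.dist j ℓ := by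
  rw [← Real.rpow_natCast, ← Real.rpow_mul zero_le_two, Nat.cast_dist]
  ring_nf

theorem stmt_5 {H : Type*} [NormedAddCommGroup H] [InnerProductSpace ℂ H]
    [CompleteSpace H] :
    ∃ C > 0, ∀ T : ℕ → H →L[ℂ] H,
      (∀ j ℓ : ℕ, ‖ContinuousLinearMap.adjoint (T j) ∘L T ℓ‖
          ≤ (2:ℝ) ^ (-|(j:ℝ) - (ℓ:ℝ)| / 2)) →
      ∀ (v : ℕ → H) (s : Finset ℕ),
        ‖∑ ℓ ∈ s, T ℓ (v ℓ)‖ ≤ C * Real.sqrt (∑ ℓ ∈ s, ‖v ℓ‖^2) := by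
  set r : ℝ := (2 : ℝ) ^ (-(1 : ℝ) / 2)
  have hr₀ : 0 ≤ r := by positivity
  have hr₁ : r < 1 := Real.rpow_lt_one_of_one_lt_of_neg one_lt_two (by norm_num)
  have hB : 0 < 2 * (1 - r)⁻¹ := by have := sub_pos.2 hr₁; positivity
  have hrow (ℓ : ℕ) (s : Finset ℕ) : ∑ j ∈ s, r ^ Nat.dist j ℓ ≤ 2 * (1 - r)⁻¹ := by
    rw [← tsum_geometric_of_lt_one hr₀ hr₁]
    exact Nat.sum_comp_dist_le_two_mul_tsum (fun k => pow_nonneg hr₀ k)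
      (summable_geometric_of_lt_one hr₀ hr₁) s ℓ
  refine ⟨√(2 * (1 - r)⁻¹), Real.sqrt_pos.2 hB, fun T hT v s => ?_⟩
  rw [← Real.sqrt_mul hB.le, ← Real.sqrt_sq (norm_nonneg _)]
  refine Real.sqrt_le_sqrt <| norm_sum_apply_sq_le_of_sum_le s T
    (K := fun j ℓ => r ^ Nat.dist j ℓ) (fun j _ ℓ _ => two_rpow_neg_abs_sub_div_two j ℓ ▸ hT j ℓ)
    (fun j _ => ?_) (fun ℓ _ => hrow ℓ s) v
  simpa only [Nat.dist_comm j] using hrow j s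
end

section
/- (Cotlar–Stein type bound) Let H be a Hilbert space and T_0, …, T_M bounded operators on H such that ‖T_j^* T_ℓ‖ + ‖T_j T_ℓ^*‖ ≤ 2^{−|j−ℓ|/2} for all 0 ≤ j, ℓ ≤ M. Then there is a constant C independent of M such that ‖Σ_{ℓ=0}^M T_ℓ‖ ≤ C. -/
/-!
With `S = ∑ j, T j`, the C⋆-identity gives `‖S‖ ^ (2 N) = ‖(S⋆ S) ^ N‖` when `N` is a power of
two, and `(S⋆ S) ^ N` expands into the words `T j₁⋆ T ℓ₁ T j₂⋆ T ℓ₂ ⋯ T j_N⋆ T ℓ_N`. Grouping a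
word as `(T j₁⋆ T ℓ₁) ⋯ (T j_N⋆ T ℓ_N)` and as `T j₁⋆ (T ℓ₁ T j₂⋆) ⋯ (T ℓ_{N-1} T j_N⋆) T ℓ_N`
gives two norm bounds, from `‖T j⋆ T ℓ‖ ≤ a j ℓ ^ 2` and from `‖T j T ℓ⋆‖ ≤ b j ℓ ^ 2`. Their
geometric mean is `c` times the product `a j₁ ℓ₁ * b ℓ₁ j₂ * ⋯ * a j_N ℓ_N` along the path
`j₁, ℓ₁, j₂, …, ℓ_N`; summing over paths with the row-sum bounds `∑ ℓ, a j ℓ ≤ c` and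
`∑ ℓ, b j ℓ ≤ c` gives `‖S‖ ^ (2 N) ≤ card ι * c ^ (2 N)`, and letting `N → ∞` removes the
factor `card ι`.
For the theorem, the weight `2 ^ (-|j - ℓ| / 4)` has row sums at most `∑ k : ℤ, 2 ^ (-|k| / 4)`,
independently of `M`.
-/

open Finset Filter Topology

lemma Fintype.sum_fun_fin_succ {κ M : Type*} [Fintype κ] [AddCommMonoid M] (n : ℕ)
    (g : (Fin (n + 1) → κ) → M) :
    ∑ f, g f = ∑ k : κ, ∑ f : Fin n → κ, g (Fin.cons k f) := by
  rw [← (Fin.consEquiv fun _ => κ).sum_comp, Fintype.sum_prod_type]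
  rfl

lemma CStarRing.norm_one_le {A : Type*} [NormedRing A] [StarRing A] [CStarRing A] :
    ‖(1 : A)‖ ≤ 1 := by
  rcases subsingleton_or_nontrivial A with _ | _
  · simp [Subsingleton.elim (1 : A) 0]
  · exact CStarRing.norm_one.le

lemma sum_pow_eq_sum_list_prod_ofFn {R κ : Type*} [Semiring R] [Fintype κ] (X : κ → R) :
    ∀ n : ℕ, (∑ k, X k) ^ n = ∑ f : Fin n → κ, (List.ofFn fun i => X (f i)).prod
  | 0 => by simp
  | n + 1 => by
    simp [pow_succ', sum_pow_eq_sum_list_prod_ofFn X n, sum_mul_sum, Fintype.sum_fun_fin_succ n]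

lemma le_of_forall_pow_two_pow_le_mul_pow {x y K : ℝ} (hx : 0 ≤ x) (hy : 0 ≤ y)
    (h : ∀ k : ℕ, x ^ 2 ^ k ≤ K * y ^ 2 ^ k) : x ≤ y := by
  by_contra! hyx
  have hx0 : 0 < x := hy.trans_lt hyx
  have hq : Tendsto (fun k : ℕ => K * (y / x) ^ 2 ^ k) atTop (𝓝 0) := by
    have hN : Tendsto (fun k : ℕ => 2 ^ k) atTop atTop :=
      tendsto_pow_atTop_atTop_of_one_lt one_lt_two
    simpa using ((tendsto_pow_atTop_nhds_zero_of_lt_one (div_nonneg hy hx)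
      ((div_lt_one hx0).2 hyx)).comp hN).const_mul K
  obtain ⟨k, hk⟩ := (hq.eventually (gt_mem_nhds one_pos)).exists
  rw [div_pow, mul_div_assoc', div_lt_one (by positivity)] at hk
  exact (h k).not_gt hk

section ChainWeight

variable {ι : Type*}

/-- `chainWeight a b i [(j₁, ℓ₁), …, (jₙ, ℓₙ)] = b i j₁ * a j₁ ℓ₁ * b ℓ₁ j₂ * ⋯ * a jₙ ℓₙ`. -/
def chainWeight (a b : ι → ι → ℝ) : ι → List (ι × ι) → ℝ
  | _, [] => 1
  | i, p :: t => b i p.1 * a p.1 p.2 * chainWeight a b p.2 t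

variable {a b : ι → ι → ℝ}

lemma chainWeight_nonneg (ha : 0 ≤ a) (hb : 0 ≤ b) : ∀ i l, 0 ≤ chainWeight a b i l
  | _, [] => zero_le_one
  | _, _ :: t => mul_nonneg (mul_nonneg (hb _ _) (ha _ _)) (chainWeight_nonneg ha hb _ t)

lemma chainWeight_mul (a' b' : ι → ι → ℝ) :
    ∀ i l, chainWeight (a * a') (b * b') i l = chainWeight a b i l * chainWeight a' b' i l
  | _, [] => (mul_one 1).symm
  | i, p :: t => by
    simp only [chainWeight, chainWeight_mul a' b' p.2 t, Pi.mul_apply]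
    ring

lemma chainWeight_sq (i : ι) (l : List (ι × ι)) :
    chainWeight a b i l ^ 2 = chainWeight (a ^ 2) 1 i l * chainWeight 1 (b ^ 2) i l := by
  rw [← chainWeight_mul, mul_one, one_mul, sq a, sq b, chainWeight_mul, sq]

lemma sum_chainWeight_le [Fintype ι] (ha : 0 ≤ a) (hb : 0 ≤ b) {c : ℝ} (hc : 0 ≤ c)
    (ha_sum : ∀ j, ∑ ℓ, a j ℓ ≤ c) (hb_sum : ∀ j, ∑ ℓ, b j ℓ ≤ c) :
    ∀ n i, ∑ f : Fin n → ι × ι, chainWeight a b i (List.ofFn f) ≤ c ^ (2 * n)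
  | 0, _ => by simp [chainWeight]
  | n + 1, i => by
    have ih := sum_chainWeight_le ha hb hc ha_sum hb_sum n
    calc ∑ f : Fin (n + 1) → ι × ι, chainWeight a b i (List.ofFn f)
        = ∑ p : ι × ι, b i p.1 * a p.1 p.2 *
            ∑ f : Fin n → ι × ι, chainWeight a b p.2 (List.ofFn f) := by
          simp [Fintype.sum_fun_fin_succ n, chainWeight, mul_sum]
      _ ≤ ∑ p : ι × ι, b i p.1 * a p.1 p.2 * c ^ (2 * n) := by
          gcongr with p
          · exact mul_nonneg (hb _ _) (ha _ _)
          · exact ih p.2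
      _ = ∑ j, b i j * (∑ ℓ, a j ℓ) * c ^ (2 * n) := by
          simp only [Fintype.sum_prod_type, mul_sum, sum_mul]
      _ ≤ ∑ j, b i j * c * c ^ (2 * n) := by
          gcongr with j
          · exact hb _ _
          · exact ha_sum j
      _ ≤ c * c * c ^ (2 * n) := by
          rw [← sum_mul, ← sum_mul]
          gcongr
          exact hb_sum i
      _ = c ^ (2 * (n + 1)) := by ring

end ChainWeight

section Words

variable {ι A : Type*} [NormedRing A] [StarRing A] (T : ι → A)

def wordProd (l : List (ι × ι)) : A :=
  (l.map fun p => star (T p.1) * T p.2).prod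

variable {T} {a b : ι → ι → ℝ}

@[simp] lemma wordProd_nil : wordProd T [] = 1 := rfl

lemma wordProd_cons (p : ι × ι) (t : List (ι × ι)) :
    wordProd T (p :: t) = star (T p.1) * T p.2 * wordProd T t := rfl

lemma norm_wordProd_le [CStarRing A] (ha : ∀ j ℓ, ‖star (T j) * T ℓ‖ ≤ a j ℓ ^ 2) :
    ∀ i l, ‖wordProd T l‖ ≤ chainWeight (a ^ 2) 1 i l
  | _, [] => CStarRing.norm_one_le
  | _, p :: t => by
    rw [wordProd_cons, chainWeight, Pi.one_apply, Pi.one_apply, one_mul]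
    exact (norm_mul_le _ _).trans (mul_le_mul (ha _ _) (norm_wordProd_le ha _ t)
      (norm_nonneg _) (sq_nonneg _))

lemma norm_mul_wordProd_le {c : ℝ} (hT : ∀ j, ‖T j‖ ≤ c)
    (hb : ∀ j ℓ, ‖T j * star (T ℓ)‖ ≤ b j ℓ ^ 2) :
    ∀ i l, ‖T i * wordProd T l‖ ≤ c * chainWeight 1 (b ^ 2) i l
  | i, [] => by simpa [chainWeight] using hT i
  | i, p :: t => by
    have h := norm_mul_wordProd_le hT hb p.2 t
    rw [wordProd_cons, chainWeight, Pi.one_apply, Pi.one_apply, mul_one,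
      show T i * (star (T p.1) * T p.2 * wordProd T t)
        = T i * star (T p.1) * (T p.2 * wordProd T t) by simp only [mul_assoc]]
    calc _ ≤ b i p.1 ^ 2 * (c * chainWeight 1 (b ^ 2) p.2 t) :=
          (norm_mul_le _ _).trans (mul_le_mul (hb _ _) h (norm_nonneg _) (sq_nonneg _))
      _ = _ := by simp only [Pi.pow_apply]; ring

lemma norm_wordProd_cons_le [CStarRing A] (ha0 : 0 ≤ a) (hb0 : 0 ≤ b) {c : ℝ} (hc : 0 ≤ c)
    (hT : ∀ j, ‖T j‖ ≤ c) (ha : ∀ j ℓ, ‖star (T j) * T ℓ‖ ≤ a j ℓ ^ 2)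
    (hb : ∀ j ℓ, ‖T j * star (T ℓ)‖ ≤ b j ℓ ^ 2) (p : ι × ι) (t : List (ι × ι)) :
    ‖wordProd T (p :: t)‖ ≤ c * a p.1 p.2 * chainWeight a b p.2 t := by
  have h₁ : ‖wordProd T (p :: t)‖ ≤ a p.1 p.2 ^ 2 * chainWeight (a ^ 2) 1 p.2 t :=
    (norm_mul_le _ _).trans (mul_le_mul (ha _ _) (norm_wordProd_le ha _ t)
      (norm_nonneg _) (sq_nonneg _))
  have h₂ : ‖wordProd T (p :: t)‖ ≤ c * (c * chainWeight 1 (b ^ 2) p.2 t) := by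
    rw [wordProd_cons, mul_assoc]
    refine (norm_mul_le _ _).trans (mul_le_mul ?_ (norm_mul_wordProd_le hT hb _ t)
      (norm_nonneg _) hc)
    rw [norm_star]
    exact hT _
  refine le_of_pow_le_pow_left₀ two_ne_zero
    (mul_nonneg (mul_nonneg hc (ha0 _ _)) (chainWeight_nonneg ha0 hb0 _ t)) ?_
  calc ‖wordProd T (p :: t)‖ ^ 2
      ≤ (a p.1 p.2 ^ 2 * chainWeight (a ^ 2) 1 p.2 t) *
          (c * (c * chainWeight 1 (b ^ 2) p.2 t)) := by
        rw [sq]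
        exact mul_le_mul h₁ h₂ (norm_nonneg _) (h₁.trans' (norm_nonneg _))
    _ = (c * a p.1 p.2 * chainWeight a b p.2 t) ^ 2 := by
        rw [mul_pow, chainWeight_sq]
        ring

lemma sum_norm_wordProd_le [Fintype ι] [CStarRing A] (ha0 : 0 ≤ a) (hb0 : 0 ≤ b) {c : ℝ}
    (hc : 0 ≤ c) (hT : ∀ j, ‖T j‖ ≤ c) (ha : ∀ j ℓ, ‖star (T j) * T ℓ‖ ≤ a j ℓ ^ 2)
    (hb : ∀ j ℓ, ‖T j * star (T ℓ)‖ ≤ b j ℓ ^ 2)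
    (ha_sum : ∀ j, ∑ ℓ, a j ℓ ≤ c) (hb_sum : ∀ j, ∑ ℓ, b j ℓ ≤ c) (n : ℕ) :
    ∑ f : Fin (n + 1) → ι × ι, ‖wordProd T (List.ofFn f)‖
      ≤ Fintype.card ι * (c ^ 2) ^ (n + 1) := by
  calc ∑ f : Fin (n + 1) → ι × ι, ‖wordProd T (List.ofFn f)‖
      ≤ ∑ p : ι × ι, c * a p.1 p.2 *
          ∑ f : Fin n → ι × ι, chainWeight a b p.2 (List.ofFn f) := by
        simp only [Fintype.sum_fun_fin_succ n, List.ofFn_cons, mul_sum]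
        gcongr with p _ f
        exact norm_wordProd_cons_le ha0 hb0 hc hT ha hb p _
    _ ≤ ∑ p : ι × ι, c * a p.1 p.2 * c ^ (2 * n) := by
        gcongr with p
        · exact mul_nonneg hc (ha0 _ _)
        · exact sum_chainWeight_le ha0 hb0 hc ha_sum hb_sum n p.2
    _ = ∑ j : ι, c * (∑ ℓ, a j ℓ) * c ^ (2 * n) := by
        simp only [Fintype.sum_prod_type, mul_sum, sum_mul]
    _ ≤ ∑ _j : ι, c * c * c ^ (2 * n) := by
        gcongr with j
        exact ha_sum j
    _ = Fintype.card ι * (c ^ 2) ^ (n + 1) := by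
        rw [sum_const, card_univ, nsmul_eq_mul]
        ring

lemma star_sum_mul_sum_pow_eq_sum_wordProd [Fintype ι] (n : ℕ) :
    (star (∑ j, T j) * ∑ j, T j) ^ n = ∑ f : Fin n → ι × ι, wordProd T (List.ofFn f) := by
  rw [star_sum, sum_mul_sum, ← Fintype.sum_prod_type', sum_pow_eq_sum_list_prod_ofFn]
  simp [wordProd, List.map_ofFn, Function.comp_def]

end Words

theorem norm_sum_le_of_almost_orthogonal {ι A : Type*} [Fintype ι] [NormedRing A] [StarRing A]
    [CStarRing A] {T : ι → A} {a b : ι → ι → ℝ} {c : ℝ} (ha0 : 0 ≤ a) (hb0 : 0 ≤ b)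
    (hc : 0 ≤ c) (ha : ∀ j ℓ, ‖star (T j) * T ℓ‖ ≤ a j ℓ ^ 2)
    (hb : ∀ j ℓ, ‖T j * star (T ℓ)‖ ≤ b j ℓ ^ 2)
    (ha_sum : ∀ j, ∑ ℓ, a j ℓ ≤ c) (hb_sum : ∀ j, ∑ ℓ, b j ℓ ≤ c) :
    ‖∑ j, T j‖ ≤ c := by
  have hT : ∀ j, ‖T j‖ ≤ c := fun j =>
    calc ‖T j‖ ≤ a j j := le_of_pow_le_pow_left₀ two_ne_zero (ha0 j j) <| by
          simpa only [sq, CStarRing.norm_star_mul_self] using ha j j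
      _ ≤ ∑ ℓ, a j ℓ := single_le_sum (fun ℓ _ => ha0 j ℓ) (mem_univ j)
      _ ≤ c := ha_sum j
  set S := ∑ j, T j
  refine le_of_pow_le_pow_left₀ two_ne_zero hc <|
    le_of_forall_pow_two_pow_le_mul_pow (K := Fintype.card ι) (sq_nonneg _) (sq_nonneg _)
      fun k => ?_
  obtain ⟨n, hn⟩ : ∃ n, 2 ^ k = n + 1 := ⟨2 ^ k - 1, (Nat.sub_add_cancel Nat.one_le_two_pow).symm⟩
  calc (‖S‖ ^ 2) ^ 2 ^ k = ‖(star S * S) ^ 2 ^ k‖ := by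
        rw [(IsSelfAdjoint.star_mul_self S).norm_pow_two_pow, CStarRing.norm_star_mul_self, sq]
    _ ≤ ∑ f : Fin (n + 1) → ι × ι, ‖wordProd T (List.ofFn f)‖ := by
        rw [hn, star_sum_mul_sum_pow_eq_sum_wordProd]
        exact norm_sum_le _ _
    _ ≤ Fintype.card ι * (c ^ 2) ^ 2 ^ k := by
        rw [hn]
        exact sum_norm_wordProd_le ha0 hb0 hc hT ha hb ha_sum hb_sum n

lemma sum_comp_le_tsum_of_injective {α β : Type*} [Fintype α] {g : β → ℝ} (hg0 : 0 ≤ g)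
    (hg : Summable g) {e : α → β} (he : Function.Injective e) :
    ∑ x, g (e x) ≤ ∑' y, g y := by
  rw [← tsum_fintype (L := .unconditional _)]
  exact Summable.of_finite.tsum_le_tsum_of_inj e he (fun y _ => hg0 y) (fun _ => le_rfl) hg

lemma summable_pow_natAbs {r : ℝ} (h0 : 0 ≤ r) (h1 : r < 1) :
    Summable fun k : ℤ => r ^ k.natAbs :=
  .of_nat_of_neg (by simpa using summable_geometric_of_lt_one h0 h1)
    (by simpa using summable_geometric_of_lt_one h0 h1)

lemma two_rpow_pow_natAbs_sq (k : ℤ) :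
    (((2 : ℝ) ^ (-(1 / 4 : ℝ))) ^ k.natAbs) ^ 2 = 2 ^ (-|(k : ℝ)| / 2) := by
  rw [← pow_mul, ← Real.rpow_natCast, ← Real.rpow_mul zero_le_two]
  congr 1
  push_cast [Nat.cast_natAbs]
  ring

theorem stmt_6 {H : Type*} [NormedAddCommGroup H] [InnerProductSpace ℂ H]
    [CompleteSpace H] :
    ∃ C > 0, ∀ (M : ℕ) (T : Fin (M+1) → H →L[ℂ] H),
      (∀ j ℓ : Fin (M+1),
        ‖ContinuousLinearMap.adjoint (T j) ∘L T ℓ‖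
          + ‖T j ∘L ContinuousLinearMap.adjoint (T ℓ)‖
          ≤ (2:ℝ) ^ (-|((j:ℕ):ℝ) - ((ℓ:ℕ):ℝ)| / 2)) →
      ‖∑ ℓ, T ℓ‖ ≤ C := by
  set r : ℝ := 2 ^ (-(1 / 4 : ℝ))
  have hr0 : 0 ≤ r := by positivity
  have hr1 : r < 1 := Real.rpow_lt_one_of_one_lt_of_neg one_lt_two (by norm_num)
  have hg0 : 0 ≤ fun k : ℤ => r ^ k.natAbs := fun _ => pow_nonneg hr0 _
  have hg := summable_pow_natAbs hr0 hr1
  refine ⟨∑' k : ℤ, r ^ k.natAbs, hg.tsum_pos hg0 0 (by simp), fun M T hT => ?_⟩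
  set w : Fin (M + 1) → Fin (M + 1) → ℝ := fun j ℓ => r ^ ((j : ℤ) - ℓ).natAbs
  have hw0 : 0 ≤ w := fun _ _ => pow_nonneg hr0 _
  have hw : ∀ j ℓ, ‖star (T j) * T ℓ‖ + ‖T j * star (T ℓ)‖ ≤ w j ℓ ^ 2 := fun j ℓ => by
    rw [(two_rpow_pow_natAbs_sq _ : w j ℓ ^ 2 = _)]
    push_cast
    simpa only [ContinuousLinearMap.star_eq_adjoint, ContinuousLinearMap.mul_def] using hT j ℓ
  have hw_sum : ∀ j, ∑ ℓ, w j ℓ ≤ ∑' k : ℤ, r ^ k.natAbs := fun j =>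
    sum_comp_le_tsum_of_injective hg0 hg (e := fun ℓ : Fin (M + 1) => (j : ℤ) - ℓ)
      fun ℓ ℓ' h => by simpa [Fin.val_inj] using h
  refine norm_sum_le_of_almost_orthogonal hw0 hw0 (tsum_nonneg hg0) (fun j ℓ => ?_)
    (fun j ℓ => ?_) hw_sum hw_sum
  · exact le_of_add_le_of_nonneg_left (hw j ℓ) (norm_nonneg _)
  · exact le_of_add_le_of_nonneg_right (hw j ℓ) (norm_nonneg _)
end

section
/- Let p > 0, r > 0, and let v : [0, S] → ℝ be differentiable with |v(s)| < p^{1/2} for all s, and suppose v'(s) ≥ (p − v(s)²)/(r + 2 s p^{1/2}) for all s ∈ [0,S]. Then for all s ∈ [0,S]: artanh(v(s)/p^{1/2}) ≥ artanh(v(0)/p^{1/2}) + (1/2) log(1 + 2 s p^{1/2}/r). -/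
/-- The inverse hyperbolic tangent on `(-1, 1)`. -/
noncomputable def artanh (x : ℝ) : ℝ := (1/2) * Real.log ((1 + x) / (1 - x))

/-!
Since `artanh' = 1 / (1 - x²)`, the hypothesis says exactly that `s ↦ artanh (v s / √p)` grows at
rate at least `√p / (r + 2 s √p)`, which is the derivative of `s ↦ ½ log (1 + 2 s √p / r)`.
Both sides agree at `s = 0`, so the comparison follows from the monotonicity of their difference.
-/

open Set

theorem hasDerivAt_artanh {x : ℝ} (hx : |x| < 1) : HasDerivAt artanh (1 - x ^ 2)⁻¹ x := by
  obtain ⟨hneg, hpos⟩ := abs_lt.mp hx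
  have hsub : 1 - x ≠ 0 := by linarith
  have hquot : HasDerivAt (fun y => (1 + y) / (1 - y)) (2 / (1 - x) ^ 2) x := by
    refine (((hasDerivAt_id x).const_add 1).div ((hasDerivAt_id x).const_sub 1) hsub).congr_deriv ?_
    simp only [id]
    ring
  have hadd : 1 + x ≠ 0 := by linarith
  refine ((hquot.log (div_pos (by linarith) (by linarith)).ne').const_mul (1 / 2)).congr_deriv ?_
  rw [show 1 - x ^ 2 = (1 - x) * (1 + x) by ring]
  field_simp

theorem HasDerivAt.artanh {f : ℝ → ℝ} {f' x : ℝ} (hf : HasDerivAt f f' x) (hx : |f x| < 1) :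
    HasDerivAt (fun t => artanh (f t)) (f' / (1 - f x ^ 2)) x :=
  ((hasDerivAt_artanh hx).comp x hf).congr_deriv (by ring)

theorem hasDerivAt_half_log_one_add_mul_div {q r t : ℝ} (hq : 0 ≤ q) (hr : 0 < r) (ht : 0 ≤ t) :
    HasDerivAt (fun u => (1 / 2) * Real.log (1 + 2 * u * q / r)) (q / (r + 2 * t * q)) t := by
  have hlin : HasDerivAt (fun u => 1 + 2 * u * q / r) (2 * q / r) t := by
    simpa using (((hasDerivAt_id t).const_mul 2).mul_const q).div_const r |>.const_add 1
  have hpos : 0 < 1 + 2 * t * q / r := by positivity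
  refine ((hlin.log hpos.ne').const_mul (1 / 2)).congr_deriv ?_
  field_simp

theorem sub_le_sub_of_hasDerivAt_le {f g f' g' : ℝ → ℝ} {a b : ℝ} (hab : a ≤ b)
    (hf : ∀ x ∈ Icc a b, HasDerivAt f (f' x) x) (hg : ∀ x ∈ Icc a b, HasDerivAt g (g' x) x)
    (hle : ∀ x ∈ Ioo a b, g' x ≤ f' x) : g b - g a ≤ f b - f a := by
  have hfg : ∀ x ∈ Icc a b, HasDerivAt (f - g) (f' x - g' x) x :=
    fun x hx => (hf x hx).sub (hg x hx)
  have hmono : MonotoneOn (f - g) (Icc a b) := by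
    refine monotoneOn_of_hasDerivWithinAt_nonneg (f' := f' - g') (convex_Icc a b)
      (fun x hx => (hfg x hx).continuousAt.continuousWithinAt) (fun x hx => ?_) (fun x hx => ?_)
    · rw [interior_Icc] at hx ⊢
      exact (hfg x (Ioo_subset_Icc_self hx)).hasDerivWithinAt
    · rw [interior_Icc] at hx
      exact sub_nonneg.mpr (hle x hx)
  have := hmono (left_mem_Icc.mpr hab) (right_mem_Icc.mpr hab) hab
  simp only [Pi.sub_apply] at this
  linarith

theorem sqrt_div_le_div_one_sub_sq_of_sub_sq_div_le {p d v v' : ℝ} (hp : 0 < p) (hd : 0 < d)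
    (hv : |v| < √p) (h : (p - v ^ 2) / d ≤ v') : √p / d ≤ v' / √p / (1 - (v / √p) ^ 2) := by
  have hsq : √p ^ 2 = p := Real.sq_sqrt hp.le
  have hgap : 0 < p - v ^ 2 := by
    rw [← hsq, ← sq_abs v]
    exact sub_pos.mpr (pow_lt_pow_left₀ hv (abs_nonneg v) two_ne_zero)
  calc √p / d = √p / (p - v ^ 2) * ((p - v ^ 2) / d) := by field_simp
    _ ≤ √p / (p - v ^ 2) * v' := by gcongr
    _ = v' / √p / (1 - (v / √p) ^ 2) := by
        rw [div_pow, hsq, one_sub_div hp.ne', div_div_div_eq]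
        field_simp
        rw [hsq]

theorem stmt_18_general (p r S : ℝ) (hp : 0 < p) (hr : 0 < r)
    (v v' : ℝ → ℝ)
    (hderiv : ∀ s ∈ Set.Icc 0 S, HasDerivAt v (v' s) s)
    (hbound : ∀ s ∈ Set.Icc 0 S, |v s| < Real.sqrt p)
    (hineq : ∀ s ∈ Set.Icc 0 S, (p - (v s)^2) / (r + 2*s*Real.sqrt p) ≤ v' s) :
    ∀ s ∈ Set.Icc 0 S,
      artanh (v 0 / Real.sqrt p) + (1/2) * Real.log (1 + 2*s*Real.sqrt p / r)
        ≤ artanh (v s / Real.sqrt p) := by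
  intro s hs
  have hq : 0 < √p := Real.sqrt_pos.mpr hp
  have hsub : Icc 0 s ⊆ Icc 0 S := Icc_subset_Icc_right hs.2
  have hratio : ∀ t ∈ Icc 0 S, |v t / √p| < 1 := fun t ht => by
    rw [abs_div, abs_of_pos hq, div_lt_one hq]
    exact hbound t ht
  have hcompare := sub_le_sub_of_hasDerivAt_le hs.1
    (fun t ht => ((hderiv t (hsub ht)).div_const √p).artanh (hratio t (hsub ht)))
    (fun t ht => hasDerivAt_half_log_one_add_mul_div hq.le hr ht.1)
    (fun t ht => have htS := hsub (Ioo_subset_Icc_self ht)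
      sqrt_div_le_div_one_sub_sq_of_sub_sq_div_le hp (by positivity [ht.1.le]) (hbound t htS)
        (hineq t htS))
  simp only [mul_zero, zero_mul, zero_div, add_zero, Real.log_one, sub_zero] at hcompare
  linarith

theorem stmt_18 (p r S : ℝ) (hp : 0 < p) (hr : 0 < r) (hS : 0 ≤ S)
    (v v' : ℝ → ℝ)
    (hderiv : ∀ s ∈ Set.Icc 0 S, HasDerivAt v (v' s) s)
    (hbound : ∀ s ∈ Set.Icc 0 S, |v s| < Real.sqrt p)
    (hineq : ∀ s ∈ Set.Icc 0 S, (p - (v s)^2) / (r + 2*s*Real.sqrt p) ≤ v' s) :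
    ∀ s ∈ Set.Icc 0 S,
      artanh (v 0 / Real.sqrt p) + (1/2) * Real.log (1 + 2*s*Real.sqrt p / r)
        ≤ artanh (v s / Real.sqrt p) :=
  stmt_18_general p r S hp hr v v' hderiv hbound hineq
end
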